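/- Let char k = 3 and consider Sym^3(V)* with dual basis s_0*, s_1*, s_2*, s_3* and the symmetric sl_2-equivariant bracket into sl_2 determined by [s_0*, s_3*] = (1/2)H, [s_1*, s_2*] = −(1/2)H, [s_0*, s_2*] = E_{12}, [s_1*, s_1*] = −2E_{12}, [s_1*, s_3*] = −E_{21}, [s_2*, s_2*] = 2E_{21}, all other basis brackets zero. Then [[v,v],v] = 0 holds for every v = Σ α_i s_i* if and only if char k = 3; in characteristic 3 this makes sl_2 ⊕ Sym^3(V)* a Lie superalgebra. -/

import Mathlib

/-!
STATEMENT 11: On `Sym³(V)*` (dual basis `s₀*, s₁*, s₂*, s₃*`) with the symmetric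
`sl₂`-equivariant bracket into `sl₂` determined by `[s₀*,s₃*] = (1/2)H`,
`[s₁*,s₂*] = -(1/2)H`, `[s₀*,s₂*] = E₁₂`, `[s₁*,s₁*] = -2E₁₂`,
`[s₁*,s₃*] = -E₂₁`, `[s₂*,s₂*] = 2E₂₁` (other basis brackets zero), the odd
Jacobi identity `[[v,v],v] = 0` holds for every `v = Σ αᵢ sᵢ*` if and only if
`char k = 3`; in characteristic 3 this makes `sl₂ ⊕ Sym³(V)*` a Lie superalgebra.

The `sl₂`-action is `H·sᵢ* = (3-2i)sᵢ*`, `E₁₂·sᵢ* = -(4-i)s_{i-1}*`,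
`E₂₁·sᵢ* = -(i+1)s_{i+1}*`.
-/

namespace Stmt11

variable (k : Type*) [Field k]

def E12 : Matrix (Fin 2) (Fin 2) k := Matrix.single 0 1 1
def E21 : Matrix (Fin 2) (Fin 2) k := Matrix.single 1 0 1
def H : Matrix (Fin 2) (Fin 2) k := Matrix.diagonal ![1, -1]

/-- Action of `H` on `Sym³(V)*`: `H·sᵢ* = (3-2i) sᵢ*`. -/
def Hact (v : Fin 4 → k) : Fin 4 → k := ![3 * v 0, v 1, -(v 2), -3 * v 3]

/-- Action of `E₁₂` on `Sym³(V)*`: `E₁₂·sᵢ* = -(4-i) s_{i-1}*`. -/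
def E12act (v : Fin 4 → k) : Fin 4 → k := ![-3 * v 1, -2 * v 2, -(v 3), 0]

/-- Action of `E₂₁` on `Sym³(V)*`: `E₂₁·sᵢ* = -(i+1) s_{i+1}*`. -/
def E21act (v : Fin 4 → k) : Fin 4 → k := ![0, -(v 0), -2 * v 1, -3 * v 2]

/-- The action of a trace-zero matrix `X = X₀₀ H + X₀₁ E₁₂ + X₁₀ E₂₁`. -/
def act (X : Matrix (Fin 2) (Fin 2) k) (v : Fin 4 → k) : Fin 4 → k :=
  X 0 0 • Hact k v + X 0 1 • E12act k v + X 1 0 • E21act k v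

/-- The symmetric bilinear bracket `Sym³(V)* × Sym³(V)* → sl₂` with the listed
structure constants. -/
def br (x y : Fin 4 → k) : Matrix (Fin 2) (Fin 2) k :=
  ((1 / 2) * (x 0 * y 3 + x 3 * y 0) - (1 / 2) * (x 1 * y 2 + x 2 * y 1)) • H k +
    (x 0 * y 2 + x 2 * y 0 - 2 * (x 1 * y 1)) • E12 k +
    (-(x 1 * y 3 + x 3 * y 1) + 2 * (x 2 * y 2)) • E21 k

end Stmt11

/-!
Expanding the bracket, every coordinate of `[[v,v],v]` is `3` times a cubic form in the
coordinates of `v`. At `v = s₁*` these forms give `2 s₀*`, which is nonzero when `2 ≠ 0`, so the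
identity holds for all `v` exactly when `3 = 0` in `k`, i.e. when `char k = 3`.
-/

theorem ringChar_eq_iff_cast_eq_zero {R : Type*} [NonAssocSemiring R] [Nontrivial R] {p : ℕ}
    (hp : p.Prime) : ringChar R = p ↔ (p : R) = 0 :=
  ringChar.eq_iff.trans (CharP.charP_iff_prime_eq_zero hp)

namespace Stmt11

variable (k : Type*) [Field k]

def jacobiCubic (v : Fin 4 → k) : Fin 4 → k :=
  ![2 * v 1 ^ 3 - 3 * v 0 * v 1 * v 2 + v 0 ^ 2 * v 3,
    v 1 ^ 2 * v 2 - 2 * v 0 * v 2 ^ 2 + v 0 * v 1 * v 3,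
    2 * v 1 ^ 2 * v 3 - v 0 * v 2 * v 3 - v 1 * v 2 ^ 2,
    -2 * v 2 ^ 3 + 3 * v 1 * v 2 * v 3 - v 0 * v 3 ^ 2]

variable {k}

theorem act_br_self_self (h2 : (2 : k) ≠ 0) (v : Fin 4 → k) :
    act k (br k v v) v = (3 : k) • jacobiCubic k v := by
  ext i
  fin_cases i <;>
    simp [act, br, H, E12, E21, Hact, E12act, E21act, jacobiCubic, Matrix.single,
      Matrix.diagonal] <;>
    field_simp <;> ring

theorem jacobiCubic_single_one : jacobiCubic k (Pi.single 1 1) = ![2, 0, 0, 0] := by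
  ext i
  fin_cases i <;> simp [jacobiCubic]

theorem act_br_self_self_eq_zero_iff (h2 : (2 : k) ≠ 0) :
    (∀ v : Fin 4 → k, act k (br k v v) v = 0) ↔ (3 : k) = 0 := by
  refine ⟨fun h ↦ ?_, fun h3 v ↦ by rw [act_br_self_self h2, h3, zero_smul]⟩
  have h6 : (3 : k) * 2 = 0 := by
    simpa [act_br_self_self h2, jacobiCubic_single_one] using congrFun (h (Pi.single 1 1)) 0
  exact (mul_eq_zero.mp h6).resolve_right h2

end Stmt11

open Stmt11 in
theorem stmt11 (k : Type*) [Field k] (hk : ringChar k ≠ 2) :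
    (∀ v : Fin 4 → k, act k (br k v v) v = 0) ↔ ringChar k = 3 := by
  rw [act_br_self_self_eq_zero_iff (Ring.two_ne_zero hk),
    ringChar_eq_iff_cast_eq_zero Nat.prime_three, Nat.cast_ofNat]
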